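/- arXiv:2212.13291 — 6 statements merged into one kernel-verified Lean document; each statement's English description precedes it below -/
import Mathlib

section
/- Let U_1, ..., U_n be k×k complex matrices, and let M be the kn×kn block matrix with U_i in block position (i, i+1) for i < n, U_n in block position (n, 1), and zeros elsewhere. If μ is an eigenvalue of M, then μ^n is an eigenvalue of the k×k matrix U_1 U_2 ⋯ U_n. Conversely, if w is an eigenvalue of U_1 U_2 ⋯ U_n and μ^n = w, then μ is an eigenvalue of M. -/
/-- The block cyclic matrix with `U i` in block position `(i, i+1)` (indices mod `n`)
and zero blocks elsewhere. -/
def cycBlock {n k : ℕ} (U : ZMod n → Matrix (Fin k) (Fin k) ℂ) :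
    Matrix (ZMod n × Fin k) (ZMod n × Fin k) ℂ :=
  Matrix.of fun p q => if q.1 = p.1 + 1 then U p.1 p.2 q.2 else 0

open Matrix Polynomial

lemma eval_charpoly' {m : Type*} [Fintype m] [DecidableEq m] (A : Matrix m m ℂ) (μ : ℂ) :
    A.charpoly.eval μ = ((μ • 1 : Matrix m m ℂ) - A).det := by
  rw [Matrix.charpoly, ← Polynomial.coe_evalRingHom, RingHom.map_det]
  congr 1
  ext i j
  by_cases h : i = j
  · subst h; simp [charmatrix_apply_eq, Matrix.one_apply]
  · simp [charmatrix_apply_ne _ _ _ h, Matrix.one_apply_ne h]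

lemma isRoot_charpoly_iff' {m : Type*} [Fintype m] [DecidableEq m] (A : Matrix m m ℂ) (μ : ℂ) :
    A.charpoly.IsRoot μ ↔ ∃ v, v ≠ 0 ∧ A *ᵥ v = μ • v := by
  rw [Polynomial.IsRoot, eval_charpoly', ← Matrix.exists_mulVec_eq_zero_iff]
  constructor
  · rintro ⟨v, hv, h⟩
    refine ⟨v, hv, ?_⟩
    rw [Matrix.sub_mulVec, Matrix.smul_mulVec, Matrix.one_mulVec, sub_eq_zero] at h
    exact h.symm
  · rintro ⟨v, hv, h⟩
    refine ⟨v, hv, ?_⟩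
    rw [Matrix.sub_mulVec, Matrix.smul_mulVec, Matrix.one_mulVec, sub_eq_zero, h]

lemma det_list_prod' {m : Type*} [Fintype m] [DecidableEq m] (l : List (Matrix m m ℂ)) :
    l.prod.det = (l.map Matrix.det).prod := by
  induction l with
  | nil => simp
  | cons a l ih => simp [Matrix.det_mul, ih]

lemma cycBlock_mulVec' {n k : ℕ} [NeZero n] (U : ZMod n → Matrix (Fin k) (Fin k) ℂ)
    (v : ZMod n × Fin k → ℂ) (p : ZMod n) (x : Fin k) :
    (cycBlock U *ᵥ v) (p, x) = (U p *ᵥ fun y => v (p + 1, y)) x := by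
  simp [cycBlock, Matrix.mulVec, dotProduct, Fintype.sum_prod_type, ite_mul,
    Finset.sum_comm]

lemma list_form (n : ℕ) {α : Type*} (f : ZMod n → α) :
    ((List.range n).map fun j => f (j : ZMod n))
      = (List.range n).map fun a : ℕ => f ((a : ℕ) : ZMod n) := by
  show List.map _ (List.flatMap _ _) = _
  rw [show (fun a : ℕ => (pure (↑a) : List (ZMod n))) = pure ∘ (fun a : ℕ => (a : ZMod n)) from rfl,
    List.flatMap_pure_eq_map, List.map_map]
  rfl

/-- Suffix product `U j * U (j+1) * ⋯ * U (n-1)`. -/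
noncomputable def Lmat (n k : ℕ) (U : ZMod n → Matrix (Fin k) (Fin k) ℂ) (j : ℕ) :
    Matrix (Fin k) (Fin k) ℂ :=
  ((List.range' j (n - j)).map fun i : ℕ => U ((i : ℕ) : ZMod n)).prod

/-- Prefix product `U 0 * U 1 * ⋯ * U (j-1)`. -/
noncomputable def Rmat (n k : ℕ) (U : ZMod n → Matrix (Fin k) (Fin k) ℂ) (j : ℕ) :
    Matrix (Fin k) (Fin k) ℂ :=
  ((List.range j).map fun i : ℕ => U ((i : ℕ) : ZMod n)).prod

lemma Lmat_zero (n k : ℕ) (U : ZMod n → Matrix (Fin k) (Fin k) ℂ) :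
    Lmat n k U 0 = ((List.range n).map fun a : ℕ => U ((a : ℕ) : ZMod n)).prod := by
  simp [Lmat, List.range_eq_range']

lemma detP_zero_iff (n k : ℕ) [NeZero n] (U : ZMod n → Matrix (Fin k) (Fin k) ℂ) :
    (((List.range n).map fun a : ℕ => U ((a : ℕ) : ZMod n)).prod).det = 0
      ↔ ∃ p : ZMod n, (U p).det = 0 := by
  rw [det_list_prod', List.map_map, List.prod_eq_zero_iff]
  constructor
  · intro h
    obtain ⟨i, _, hdi⟩ := List.mem_map.1 h
    exact ⟨_, hdi⟩
  · rintro ⟨p, hp⟩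
    refine List.mem_map.2 ⟨p.val, List.mem_range.2 (ZMod.val_lt p), ?_⟩
    simp only [Function.comp_apply, ZMod.natCast_rightInverse p]
    exact hp

lemma Lmat_self (n k : ℕ) (U : ZMod n → Matrix (Fin k) (Fin k) ℂ) :
    Lmat n k U n = 1 := by
  simp [Lmat]

lemma Lmat_step (n k : ℕ) (U : ZMod n → Matrix (Fin k) (Fin k) ℂ) {j : ℕ} (hj : j < n) :
    Lmat n k U j = U (j : ZMod n) * Lmat n k U (j + 1) := by
  have h2 : n - j = (n - (j + 1)) + 1 := by omega
  rw [Lmat, Lmat, h2, List.range'_succ, List.map_cons, List.prod_cons]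

lemma Rmat_step (n k : ℕ) (U : ZMod n → Matrix (Fin k) (Fin k) ℂ) (j : ℕ) :
    Rmat n k U (j + 1) = Rmat n k U j * U (j : ZMod n) := by
  simp [Rmat, List.range_succ]

/-- `μ` is an eigenvalue of the block cyclic matrix `M` built from `U_1, …, U_n`
iff `μ^n` is an eigenvalue of the ordered product `U_1 U_2 ⋯ U_n`; in particular each
`n`-th root of an eigenvalue of the product is an eigenvalue of `M`. -/
theorem cycBlock_eigenvalues (n k : ℕ) [NeZero n]
    (U : ZMod n → Matrix (Fin k) (Fin k) ℂ) (μ : ℂ) :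
    (cycBlock U).charpoly.IsRoot μ ↔
      (((List.range n).map fun j => U (j : ZMod n)).prod).charpoly.IsRoot (μ ^ n) := by
  classical
  have hn : 0 < n := Nat.pos_of_ne_zero (NeZero.ne n)
  rw [isRoot_charpoly_iff', isRoot_charpoly_iff', list_form n U]
  by_cases hμ : μ = 0
  · subst hμ
    rw [zero_pow (NeZero.ne n)]
    constructor
    · rintro ⟨v, hv, hMv⟩
      rw [zero_smul] at hMv
      obtain ⟨⟨p, x⟩, hpx⟩ : ∃ q, v q ≠ 0 := by
        by_contra h; push_neg at h; exact hv (funext h)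
      have hrel : U (p - 1) *ᵥ (fun y => v (p, y)) = 0 := by
        funext z
        have h1 := congrFun hMv (p - 1, z)
        rw [cycBlock_mulVec'] at h1
        simpa [sub_add_cancel] using h1
      have hdet : (U (p - 1)).det = 0 :=
        Matrix.exists_mulVec_eq_zero_iff.1 ⟨_, fun h => hpx (congrFun h x), hrel⟩
      have hdP : (((List.range n).map fun a : ℕ => U ((a : ℕ) : ZMod n)).prod).det = 0 :=
        (detP_zero_iff n k U).2 ⟨p - 1, hdet⟩
      obtain ⟨w, hw, hPw⟩ := Matrix.exists_mulVec_eq_zero_iff.2 hdP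
      exact ⟨w, hw, by rw [zero_smul]; exact hPw⟩
    · rintro ⟨w, hw, hPw⟩
      rw [zero_smul] at hPw
      have hdP : (((List.range n).map fun a : ℕ => U ((a : ℕ) : ZMod n)).prod).det = 0 :=
        Matrix.exists_mulVec_eq_zero_iff.1 ⟨w, hw, hPw⟩
      obtain ⟨i, hdi⟩ := (detP_zero_iff n k U).1 hdP
      obtain ⟨u, hu, hUu⟩ := Matrix.exists_mulVec_eq_zero_iff.2 hdi
      refine ⟨fun q => if q.1 = i + 1 then u q.2 else 0, ?_, ?_⟩
      · intro h0
        obtain ⟨x0, hx0⟩ : ∃ x, u x ≠ 0 := by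
          by_contra h; push_neg at h; exact hu (funext h)
        have := congrFun h0 (i + 1, x0)
        simp only [Pi.zero_apply, if_pos rfl] at this
        exact hx0 this
      · rw [zero_smul]
        funext ⟨p, x⟩
        rw [show ((0 : ZMod n × Fin k → ℂ) (p, x)) = 0 from rfl, cycBlock_mulVec']
        by_cases hpi : p = i
        · subst hpi
          have : (fun y => if p + 1 = p + 1 then u y else 0) = u := by simp
          simp only [this]
          exact congrFun hUu x
        · have : (fun y => if p + 1 = i + 1 then u y else (0:ℂ)) = 0 := by
            funext y; simp [hpi]
          simp only [this, Matrix.mulVec_zero, Pi.zero_apply]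
  · constructor
    · rintro ⟨v, hv, hMv⟩
      have hrel : ∀ p : ZMod n, U p *ᵥ (fun y => v (p + 1, y)) = μ • fun y => v (p, y) := by
        intro p
        funext x
        have h1 := congrFun hMv (p, x)
        rw [cycBlock_mulVec'] at h1
        simpa using h1
      have key : ∀ j : ℕ, Rmat n k U j *ᵥ (fun y => v ((j : ZMod n), y))
          = μ ^ j • fun y => v (0, y) := by
        intro j
        induction j with
        | zero => simp [Rmat]
        | succ j ih =>
          rw [Rmat_step, ← Matrix.mulVec_mulVec]
          have hc : (fun y => v (((j + 1 : ℕ) : ZMod n), y))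
              = fun y => v ((j : ZMod n) + 1, y) := by push_cast; rfl
          rw [hc, hrel j, Matrix.mulVec_smul, ih, smul_smul, pow_succ, mul_comm]
      have hPn : ((List.range n).map fun a : ℕ => U ((a : ℕ) : ZMod n)).prod *ᵥ
          (fun y => v (0, y)) = μ ^ n • fun y => v (0, y) := by
        have := key n
        rwa [ZMod.natCast_self, show Rmat n k U n
          = ((List.range n).map fun a : ℕ => U ((a : ℕ) : ZMod n)).prod from rfl] at this
      refine ⟨fun y => v (0, y), ?_, hPn⟩
      intro hz
      have claim : ∀ m : ℕ, (fun y => v (((n - m : ℕ) : ZMod n), y)) = 0 := by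
        intro m
        induction m with
        | zero => simpa [ZMod.natCast_self] using hz
        | succ m ih =>
          by_cases hm : m < n
          · have h1 : ((n - (m + 1) : ℕ) : ZMod n) + 1 = ((n - m : ℕ) : ZMod n) := by
              have he : (n - (m + 1)) + 1 = n - m := by omega
              rw [← he]; push_cast; ring
            have h2 := hrel ((n - (m + 1) : ℕ) : ZMod n)
            rw [h1, ih, Matrix.mulVec_zero] at h2
            exact ((smul_eq_zero.mp h2.symm).resolve_left hμ)
          · have he : n - (m + 1) = n - m := by omega
            rw [he]; exact ih
      apply hv
      funext ⟨p, x⟩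
      have hpe : ((n - (n - p.val) : ℕ) : ZMod n) = p := by
        have h : n - (n - p.val) = p.val := by have := ZMod.val_lt p; omega
        rw [h]; exact ZMod.natCast_rightInverse p
      have := congrFun (claim (n - p.val)) x
      rwa [hpe] at this
    · rintro ⟨w, hw, hPw⟩
      set v : ZMod n × Fin k → ℂ :=
        fun q => μ⁻¹ ^ (n - q.1.val) * ((Lmat n k U q.1.val) *ᵥ w) q.2 with hvdef
      have hv0 : ∀ y, v (0, y) = w y := by
        intro y
        have : v (0, y) = μ⁻¹ ^ n * ((Lmat n k U 0) *ᵥ w) y := by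
          simp [hvdef, ZMod.val_zero]
        rw [this, Lmat_zero, hPw]
        simp only [Pi.smul_apply, smul_eq_mul, ← mul_assoc, inv_pow,
          inv_mul_cancel₀ (pow_ne_zero n hμ), one_mul]
      refine ⟨v, ?_, ?_⟩
      · intro h0
        obtain ⟨x0, hx0⟩ : ∃ x, w x ≠ 0 := by
          by_contra h; push_neg at h; exact hw (funext h)
        exact hx0 (by rw [← hv0 x0]; exact congrFun h0 (0, x0))
      · funext ⟨p, x⟩
        rw [cycBlock_mulVec']
        have hpval : p.val < n := ZMod.val_lt p
        show (U p *ᵥ fun y => v (p + 1, y)) x = μ * v (p, x)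
        have hUp : U ((p.val : ℕ) : ZMod n) = U p := by
          rw [ZMod.natCast_rightInverse p]
        by_cases hp1 : p.val + 1 = n
        · have hone : p + 1 = 0 := by
            have h1 : ((p.val + 1 : ℕ) : ZMod n) = 0 := by
              rw [hp1, ZMod.natCast_self]
            rwa [Nat.cast_add, Nat.cast_one, ZMod.natCast_rightInverse p] at h1
          have hfn : (fun y => v (p + 1, y)) = w := by
            funext y; rw [hone]; exact hv0 y
          rw [hfn]
          have hLp : Lmat n k U p.val = U p := by
            rw [Lmat_step n k U hpval, hp1, Lmat_self, mul_one, hUp]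
          have hnp : n - p.val = 1 := by omega
          show (U p *ᵥ w) x = μ * (μ⁻¹ ^ (n - p.val) * ((Lmat n k U p.val) *ᵥ w) x)
          rw [hLp, hnp, pow_one, ← mul_assoc, mul_inv_cancel₀ hμ, one_mul]
        · have hlt : p.val + 1 < n := by omega
          have hval1 : (p + 1).val = p.val + 1 := by
            have : p + 1 = ((p.val + 1 : ℕ) : ZMod n) := by
              rw [Nat.cast_add, Nat.cast_one, ZMod.natCast_rightInverse p]
            rw [this, ZMod.val_cast_of_lt hlt]
          have hfn : (fun y => v (p + 1, y))
              = μ⁻¹ ^ (n - (p.val + 1)) • ((Lmat n k U (p.val + 1)) *ᵥ w) := by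
            funext y
            simp [hvdef, hval1]
          rw [hfn, Matrix.mulVec_smul, Matrix.mulVec_mulVec, ← hUp,
            ← Lmat_step n k U hpval]
          show μ⁻¹ ^ (n - (p.val + 1)) * ((Lmat n k U p.val) *ᵥ w) x
            = μ * (μ⁻¹ ^ (n - p.val) * ((Lmat n k U p.val) *ᵥ w) x)
          have hnp : n - p.val = (n - (p.val + 1)) + 1 := by omega
          rw [hnp, pow_succ]
          field_simp
end

section
/- Let A be a k×k nonnegative real matrix and n a positive integer. Let T_n(A) be the kn×kn block matrix with I_k in block positions (i, i+1) for i = 1,...,n-1, block A in position (n, 1), and zeros elsewhere. Then T_n(A) is nonnegative and μ is an eigenvalue of T_n(A) if and only if μ^n is an eigenvalue of A. Consequently, the multiset of eigenvalues of T_n(A) consists of all n-th roots of the eigenvalues of A. -/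
/-- The block matrix `T_n(A)` with identity blocks `I_k` in block positions `(i, i+1)`
for `i = 1, …, n-1`, the block `A` in position `(n, 1)`, and zero blocks elsewhere
(block indices taken in `ZMod n`). -/
def cycT (n k : ℕ) (A : Matrix (Fin k) (Fin k) ℝ) :
    Matrix (ZMod n × Fin k) (ZMod n × Fin k) ℝ :=
  Matrix.of fun p q =>
    if q.1 = p.1 + 1 then
      (if p.1 + 1 = 0 then A p.2 q.2 else if p.2 = q.2 then 1 else 0)
    else 0

open Matrix Polynomial Finset

variable {R : Type*} [CommRing R]

lemma zmod_val_of_add_one_eq {n : ℕ} [NeZero n] {i : ZMod n} (h : i + 1 = 0) :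
    i.val = n - 1 := by
  obtain ⟨N, rfl⟩ := Nat.exists_eq_succ_of_ne_zero (NeZero.ne n)
  have : i = -1 := eq_neg_of_add_eq_zero_left h
  subst this
  simp [ZMod.val_neg_one N]

lemma zmod_neg_one_of_val {n : ℕ} [NeZero n] {i : ZMod n} (h : i.val = n - 1) :
    i = -1 := by
  apply ZMod.val_injective
  rw [h]
  obtain ⟨N, rfl⟩ := Nat.exists_eq_succ_of_ne_zero (NeZero.ne n)
  simp [ZMod.val_neg_one N]

lemma zmod_val_add_one_of_ne {n : ℕ} [NeZero n] {i : ZMod n} (h : i + 1 ≠ 0) :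
    (i + 1).val = i.val + 1 := by
  have hn : 1 < n := by
    rcases Nat.lt_or_ge 1 n with h1 | h1
    · exact h1
    · interval_cases n
      · exact absurd rfl (NeZero.ne 0)
      · exact absurd (Subsingleton.elim (i+1) 0) h
  have hv : i.val + 1 < n := by
    rcases Nat.lt_or_ge (i.val + 1) n with h1 | h1
    · exact h1
    · have hlt := ZMod.val_lt i
      have hval : i.val = n - 1 := by omega
      have : i = -1 := zmod_neg_one_of_val hval
      exact absurd (by rw [this]; ring) h
  rw [ZMod.val_add_of_lt (by simpa [ZMod.val_one_eq_one_mod, Nat.mod_eq_of_lt hn] using hv)]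
  simp [ZMod.val_one_eq_one_mod, Nat.mod_eq_of_lt hn]

lemma sign_addRight_one (n : ℕ) [NeZero n] :
    Equiv.Perm.sign (Equiv.addRight (1 : ZMod n)) = (-1) ^ (n - 1) := by
  obtain ⟨N, rfl⟩ := Nat.exists_eq_succ_of_ne_zero (NeZero.ne n)
  have h0 : (Equiv.addRight (1 : ZMod (N+1))) = finRotate (N + 1) := by
    refine Equiv.ext ?_
    intro j
    show _ = finRotate (N + 1) j
    erw [finRotate_succ_apply]
    rfl
  rw [h0]
  exact sign_finRotate (N + 1)

/-- generalization of `cycT` to any commutative ring -/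
def cycTR (n k : ℕ) (A : Matrix (Fin k) (Fin k) R) :
    Matrix (ZMod n × Fin k) (ZMod n × Fin k) R :=
  Matrix.of fun p q =>
    if q.1 = p.1 + 1 then
      (if p.1 + 1 = 0 then A p.2 q.2 else if p.2 = q.2 then 1 else 0)
    else 0

theorem det_scalar_sub_cycTR (n k : ℕ) [NeZero n] (x : R) (A : Matrix (Fin k) (Fin k) R) :
    (Matrix.scalar (ZMod n × Fin k) x - cycTR n k A).det
      = (Matrix.scalar (Fin k) (x ^ n) - A).det := by
  classical
  rcases Nat.eq_zero_or_pos k with rfl | hk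
  · haveI : IsEmpty (ZMod n × Fin 0) := by infer_instance
    rw [Matrix.det_isEmpty, Matrix.det_isEmpty]
  set M : Matrix (ZMod n × Fin k) (ZMod n × Fin k) R :=
    Matrix.scalar (ZMod n × Fin k) x - cycTR n k A with hMdef
  have hM : ∀ p q, M p q = (if p = q then x else 0) -
      (if q.1 = p.1 + 1 then (if p.1 + 1 = 0 then A p.2 q.2
        else if p.2 = q.2 then 1 else 0) else 0) := by
    intro p q
    simp [hMdef, cycTR, Matrix.scalar_apply, Matrix.diagonal_apply, Matrix.sub_apply]
  set U : Matrix (ZMod n × Fin k) (ZMod n × Fin k) R :=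
    Matrix.of (fun p q =>
      if q.1 = 0 then (if p.2 = q.2 then x ^ p.1.val else 0)
      else (if p = q then 1 else 0)) with hUdef
  set V : Matrix (ZMod n × Fin k) (ZMod n × Fin k) R :=
    Matrix.of (fun p q =>
      if q.1 = 0 then
        (if p.1 + 1 = 0 then (if p.2 = q.2 then x ^ n else 0) - A p.2 q.2 else 0)
      else M p q) with hVdef
  -- Step 1 : M * U = V
  have hMU : M * U = V := by
    ext ⟨i, a⟩ ⟨j, b⟩
    rw [Matrix.mul_apply]
    by_cases hj : j = 0
    · subst hj
      rw [Fintype.sum_prod_type]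
      have hterm : ∀ m : ZMod n,
          (∑ c : Fin k, M (i,a) (m,c) * U (m,c) (0,b)) = M (i,a) (m,b) * x ^ m.val := by
        intro m
        rw [Finset.sum_eq_single b]
        · simp [hUdef]
        · intro c _ hc
          simp [hUdef, hc]
        · simp
      simp_rw [hterm]
      have hexp : ∀ m : ZMod n, M (i,a) (m,b) * x ^ m.val
          = (if (i,a) = ((m,b) : ZMod n × Fin k) then x else 0) * x ^ m.val
            - ((if m = i + 1 then (if i + 1 = 0 then A a b
                else if a = b then 1 else 0) else 0)) * x ^ m.val := by
        intro m
        rw [hM]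
        ring_nf
      simp_rw [hexp]
      rw [Finset.sum_sub_distrib]
      have h1 : (∑ m : ZMod n, (if (i,a) = ((m,b) : ZMod n × Fin k) then x else 0) * x ^ m.val)
          = if a = b then x * x ^ i.val else 0 := by
        rw [Finset.sum_eq_single i]
        · by_cases hab : a = b <;> simp [Prod.ext_iff, hab]
        · intro m _ hm
          simp [Prod.ext_iff, Ne.symm hm]
        · simp
      have h2 : (∑ m : ZMod n, (if m = i + 1 then (if i + 1 = 0 then A a b
            else if a = b then 1 else 0) else 0) * x ^ m.val)
          = (if i + 1 = 0 then A a b else if a = b then 1 else 0) * x ^ (i+1).val := by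
        rw [Finset.sum_eq_single (i+1)]
        · simp
        · intro m _ hm
          simp [hm]
        · simp
      rw [h1, h2]
      by_cases hi : i + 1 = 0
      · have hval : i.val = n - 1 := zmod_val_of_add_one_eq hi
        have hxn : x * x ^ (n-1) = x ^ n := by
          rw [← pow_succ']
          congr 1
          have := NeZero.ne n
          omega
        simp only [hVdef, Matrix.of_apply, if_pos rfl, if_pos hi, hi, hval,
          ZMod.val_zero, pow_zero, mul_one]
        by_cases hab : a = b <;> simp [hab, hxn]
      · rw [zmod_val_add_one_of_ne hi]
        simp only [hVdef, Matrix.of_apply, if_pos rfl, if_neg hi]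
        by_cases hab : a = b <;> simp [hab, pow_succ, mul_comm]
    · have hU : ∀ r : ZMod n × Fin k, U r (j, b) = if r = (j,b) then 1 else 0 := by
        intro r
        simp [hUdef, hj]
      simp_rw [hU, mul_ite, mul_one, mul_zero]
      rw [Finset.sum_ite_eq' Finset.univ ((j,b) : ZMod n × Fin k)]
      simp [hVdef, hj]
  -- Step 2 : det U = 1
  have hUBT : (U.transpose).BlockTriangular (fun p : ZMod n × Fin k => p.1.val) := by
    intro p q hlt
    have hlt' : q.1.val < p.1.val := hlt
    show U q p = 0
    have hp0 : p.1 ≠ 0 := by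
      intro h
      rw [h] at hlt'
      simp at hlt'
    have hne : q ≠ p := by
      intro h
      rw [h] at hlt'
      exact lt_irrefl _ hlt'
    simp [hUdef, hp0, hne]
  have hdetU : U.det = 1 := by
    rw [← Matrix.det_transpose, hUBT.det]
    refine Finset.prod_eq_one ?_
    intro m _
    have hblk : (U.transpose.toSquareBlock (fun p : ZMod n × Fin k => p.1.val) m) = 1 := by
      ext pp qq
      obtain ⟨p, hp⟩ := pp
      obtain ⟨q, hq⟩ := qq
      have hpq1 : p.1 = q.1 := ZMod.val_injective n (hp.trans hq.symm)
      show U q p = _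
      rw [Matrix.one_apply]
      simp only [Subtype.mk.injEq]
      by_cases hp0 : p.1 = 0
      · have hq1 : q.1.val = 0 := by rw [← hpq1, hp0]; simp
        simp only [hUdef, Matrix.of_apply, if_pos hp0, hq1, pow_zero]
        by_cases hab : p.2 = q.2
        · have : p = q := Prod.ext hpq1 hab
          simp [this, hab.symm]
        · have : p ≠ q := fun h => hab (by rw [h])
          simp [this, hab, Ne.symm hab]
      · simp only [hUdef, Matrix.of_apply, if_neg hp0]
        by_cases hpq : p = q
        · simp [hpq]
        · simp [hpq, Ne.symm hpq]
    rw [hblk, Matrix.det_one]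
  -- Step 3 : det V via permutation and block triangularity
  set σ : Equiv.Perm (ZMod n × Fin k) :=
    Equiv.prodCongrLeft (fun _ : Fin k => Equiv.addRight (1 : ZMod n)) with hσdef
  set W : Matrix (ZMod n × Fin k) (ZMod n × Fin k) R := V.submatrix id σ with hWdef
  have hWapp : ∀ (p : ZMod n × Fin k) (j : ZMod n) (b : Fin k),
      W p (j, b) = V p (j + 1, b) := by
    intro p j b
    show V p (σ (j, b)) = _
    rfl
  have hWBT : (W.transpose).BlockTriangular (fun p : ZMod n × Fin k => p.1.val) := by
    intro p q hlt
    have hlt' : q.1.val < p.1.val := hlt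
    show W q p = 0
    obtain ⟨pi, pa⟩ := p
    obtain ⟨qi, qa⟩ := q
    simp only [] at hlt'
    rw [hWapp]
    by_cases hp1 : pi + 1 = 0
    · have hq1 : qi + 1 ≠ 0 := by
        intro h
        rw [zmod_val_of_add_one_eq h, zmod_val_of_add_one_eq hp1] at hlt'
        exact lt_irrefl _ hlt'
      have h0 : (pi + 1 : ZMod n) = 0 := hp1
      rw [hVdef]
      show (if (pi + 1 : ZMod n) = 0 then
        (if (qi + 1 : ZMod n) = 0 then (if qa = pa then x ^ n else 0) - A qa pa else 0)
        else M (qi, qa) (pi + 1, pa)) = 0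
      rw [if_pos hp1, if_neg hq1]
    · have hc1 : ((qi, qa) : ZMod n × Fin k) ≠ (pi + 1, pa) := by
        intro h
        have h1 : qi = pi + 1 := congrArg Prod.fst h
        rw [h1, zmod_val_add_one_of_ne hp1] at hlt'
        omega
      have hc2 : pi + 1 ≠ qi + 1 := by
        intro h
        have h1 : pi = qi := by
          have := add_right_cancel h
          exact this
        rw [h1] at hlt'
        exact lt_irrefl _ hlt'
      rw [hVdef]
      show (if (pi + 1 : ZMod n) = 0 then
        (if (qi + 1 : ZMod n) = 0 then (if qa = pa then x ^ n else 0) - A qa pa else 0)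
        else M (qi, qa) (pi + 1, pa)) = 0
      rw [if_neg hp1, hM]
      simp [hc1, hc2]
  have himg : (Finset.image (fun p : ZMod n × Fin k => p.1.val) Finset.univ)
      = Finset.range n := by
    ext m
    simp only [Finset.mem_image, Finset.mem_range, Finset.mem_univ, true_and]
    constructor
    · rintro ⟨p, rfl⟩
      exact ZMod.val_lt p.1
    · intro hm
      exact ⟨((m : ZMod n), ⟨0, hk⟩), ZMod.val_cast_of_lt hm⟩
  have hblock : ∀ m : ℕ, m < n →
      ((W.transpose).toSquareBlock (fun p : ZMod n × Fin k => p.1.val) m).det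
        = if m = n - 1 then (Matrix.scalar (Fin k) (x ^ n) - A).det else (-1 : R) ^ k := by
    intro m hm
    let e : Fin k ≃ {p : ZMod n × Fin k // p.1.val = m} :=
      { toFun := fun a => ⟨((m : ZMod n), a), ZMod.val_cast_of_lt hm⟩
        invFun := fun p => p.1.2
        left_inv := fun a => rfl
        right_inv := by
          rintro ⟨⟨pi, pa⟩, hp⟩
          have h1 : (m : ZMod n) = pi := by
            apply ZMod.val_injective
            rw [ZMod.val_cast_of_lt hm, hp]
          simp [h1] }
    rw [← Matrix.det_submatrix_equiv_self e]
    by_cases hmn : m = n - 1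
    · have hm1 : (m : ZMod n) + 1 = 0 := by
        subst hmn
        have h2 : ((n - 1 : ℕ) : ZMod n) + 1 = ((n - 1 + 1 : ℕ) : ZMod n) := by push_cast; ring
        rw [h2, show n - 1 + 1 = n by have := NeZero.ne n; omega]
        simp
      have hsub : ((W.transpose).toSquareBlock (fun p : ZMod n × Fin k => p.1.val) m).submatrix e e
          = (Matrix.scalar (Fin k) (x ^ n) - A).transpose := by
        ext a b
        simp only [Matrix.submatrix_apply, Matrix.toSquareBlock_def, Matrix.transpose_apply, Matrix.of_apply]
        show W ((m : ZMod n), b) ((m : ZMod n), a) = _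
        rw [hWapp, hm1]
        simp [hVdef, hm1, Matrix.scalar_apply, Matrix.diagonal_apply, Matrix.sub_apply,
          Matrix.transpose_apply]
      rw [hsub, Matrix.det_transpose, if_pos hmn]
    · have hm1 : (m : ZMod n) + 1 ≠ 0 := by
        intro h
        have h1 := zmod_val_of_add_one_eq h
        rw [ZMod.val_cast_of_lt hm] at h1
        exact hmn h1
      have hself : (m : ZMod n) ≠ (m : ZMod n) + 1 := by
        intro h
        have h1 := zmod_val_add_one_of_ne hm1
        rw [← h] at h1
        omega
      have hsub : ((W.transpose).toSquareBlock (fun p : ZMod n × Fin k => p.1.val) m).submatrix e e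
          = -(1 : Matrix (Fin k) (Fin k) R) := by
        ext a b
        simp only [Matrix.submatrix_apply, Matrix.toSquareBlock_def, Matrix.transpose_apply, Matrix.of_apply]
        show W ((m : ZMod n), b) ((m : ZMod n), a) = _
        rw [hWapp]
        rw [hVdef]
        simp only [Matrix.of_apply]
        rw [if_neg hm1, hM]
        have hc1 : (((m : ZMod n), b) : ZMod n × Fin k) ≠ ((m : ZMod n) + 1, a) :=
          fun h => hself (congrArg Prod.fst h)
        simp [hc1, hm1, Matrix.one_apply, eq_comm]
      rw [hsub, Matrix.det_neg, Matrix.det_one, if_neg hmn]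
      simp
  have hdetWT : (W.transpose).det
      = ((-1 : R) ^ k) ^ (n - 1) * (Matrix.scalar (Fin k) (x ^ n) - A).det := by
    rw [hWBT.det, himg]
    obtain ⟨N, hN⟩ := Nat.exists_eq_succ_of_ne_zero (NeZero.ne n)
    subst hN
    rw [Finset.prod_range_succ]
    have h1 : ∀ m ∈ Finset.range N,
        ((W.transpose).toSquareBlock (fun p : ZMod (N+1) × Fin k => p.1.val) m).det
          = (-1 : R) ^ k := by
      intro m hm
      rw [Finset.mem_range] at hm
      rw [hblock m (by omega), if_neg (by omega)]
    rw [Finset.prod_congr rfl h1, Finset.prod_const, Finset.card_range,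
      hblock N (by omega), if_pos (by omega)]
    simp
  have hs2 : ((-1 : R) ^ ((n-1)*k)) * ((-1 : R) ^ ((n-1)*k)) = 1 := by
    rw [← pow_add]
    exact Even.neg_one_pow ⟨(n-1)*k, rfl⟩
  have hsign : ((Equiv.Perm.sign σ : ℤ) : R) = (-1 : R) ^ ((n-1)*k) := by
    have h1 : Equiv.Perm.sign σ = ((-1 : ℤˣ) ^ (n-1)) ^ k := by
      rw [hσdef, Equiv.Perm.sign_prodCongrLeft]
      simp [sign_addRight_one]
    rw [h1]
    push_cast
    rw [← pow_mul]
  have hp := Matrix.det_permute' σ V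
  have hVdet : V.det = (Matrix.scalar (Fin k) (x ^ n) - A).det := by
    calc V.det = (-1:R)^((n-1)*k) * ((-1:R)^((n-1)*k) * V.det) := by
          rw [← mul_assoc, hs2, one_mul]
      _ = (-1:R)^((n-1)*k) * W.det := by rw [hp, hsign]
      _ = (-1:R)^((n-1)*k) * (((-1 : R) ^ k) ^ (n - 1)
            * (Matrix.scalar (Fin k) (x ^ n) - A).det) := by
          rw [← Matrix.det_transpose W, hdetWT]
      _ = (Matrix.scalar (Fin k) (x ^ n) - A).det := by
          rw [← pow_mul, mul_comm k (n-1), ← mul_assoc, hs2, one_mul]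
  calc M.det = M.det * U.det := by rw [hdetU, mul_one]
    _ = (M * U).det := (Matrix.det_mul M U).symm
    _ = V.det := by rw [hMU]
    _ = (Matrix.scalar (Fin k) (x ^ n) - A).det := hVdet

theorem charpoly_cycTR (n k : ℕ) [NeZero n] (B : Matrix (Fin k) (Fin k) R) :
    (cycTR n k B).charpoly = B.charpoly.comp (X ^ n) := by
  have hmap : (C : R →+* R[X]).mapMatrix (cycTR n k B)
      = cycTR n k ((C : R →+* R[X]).mapMatrix B) := by
    ext ⟨i,a⟩ ⟨j,b⟩
    simp [cycTR, RingHom.mapMatrix_apply, Matrix.map_apply, apply_ite (C : R →+* R[X])]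
  rw [Matrix.charpoly, Matrix.charmatrix, hmap, det_scalar_sub_cycTR]
  rw [Polynomial.comp, Matrix.charpoly, ← Polynomial.coe_eval₂RingHom, RingHom.map_det]
  congr 1
  ext i j
  by_cases hij : i = j <;>
    simp [Matrix.charmatrix, Matrix.scalar_apply, Matrix.sub_apply, Matrix.diagonal_apply,
      Matrix.map_apply, RingHom.mapMatrix_apply, hij]


/-- For a nonnegative `k×k` matrix `A`, the matrix `T_n(A)` is nonnegative and its
complex eigenvalues are exactly the `n`-th roots of the eigenvalues of `A`:
`μ` is an eigenvalue of `T_n(A)` iff `μ^n` is an eigenvalue of `A`, and the root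
multiset of the characteristic polynomial of `T_n(A)` is obtained from that of `A`
by taking all `n`-th roots. -/
theorem cycT_nonneg_and_eigenvalues (n k : ℕ) [NeZero n]
    (A : Matrix (Fin k) (Fin k) ℝ) (hA : ∀ i j, 0 ≤ A i j) :
    (∀ p q, 0 ≤ cycT n k A p q) ∧
    (∀ μ : ℂ, ((cycT n k A).map (fun x => (x : ℂ))).charpoly.IsRoot μ ↔
        (A.map (fun x => (x : ℂ))).charpoly.IsRoot (μ ^ n)) ∧
    ((cycT n k A).map (fun x => (x : ℂ))).charpoly.roots =
      ((A.map (fun x => (x : ℂ))).charpoly.roots).bind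
        (fun w => (Polynomial.X ^ n - Polynomial.C w).roots) := by
  have hofReal : (cycT n k A).map (fun x => (x : ℂ))
      = cycTR n k (A.map (fun x => (x : ℂ))) := by
    ext ⟨i,a⟩ ⟨j,b⟩
    simp [cycT, cycTR, Matrix.map_apply, apply_ite (fun x : ℝ => (x : ℂ))]
  set B := A.map (fun x : ℝ => (x : ℂ)) with hB
  have hcp : ((cycT n k A).map (fun x => (x : ℂ))).charpoly = B.charpoly.comp (X ^ n) := by
    rw [hofReal, charpoly_cycTR]
  refine ⟨?_, ?_, ?_⟩
  · intro p q
    simp only [cycT, Matrix.of_apply]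
    split_ifs with h1 h2 h3
    exacts [hA _ _, zero_le_one, le_refl 0, le_refl 0]
  · intro μ
    rw [hcp]
    simp [Polynomial.IsRoot, Polynomial.eval_comp]
  · rw [hcp]
    have hmonic : B.charpoly.Monic := Matrix.charpoly_monic B
    have hsplit : B.charpoly = (B.charpoly.roots.map (fun w => X - C w)).prod :=
      (IsAlgClosed.splits _).eq_prod_roots_of_monic hmonic
    have hne : (0 : ℂ[X]) ∉ B.charpoly.roots.map (fun w => X ^ n - C w) := by
      intro h0
      rw [Multiset.mem_map] at h0
      obtain ⟨w, _, hw⟩ := h0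
      exact Polynomial.X_pow_sub_C_ne_zero (Nat.pos_of_ne_zero (NeZero.ne n)) w hw
    calc (B.charpoly.comp (X^n)).roots
        = ((B.charpoly.roots.map (fun w => X - C w)).prod.comp (X^n)).roots := by
          rw [← hsplit]
      _ = ((B.charpoly.roots.map (fun w => X ^ n - C w)).prod).roots := by
          rw [Polynomial.multiset_prod_comp, Multiset.map_map]
          congr 2
          ext w
          simp
      _ = (B.charpoly.roots.map (fun w => X ^ n - C w)).bind Polynomial.roots :=
          Polynomial.roots_multiset_prod _ hne
      _ = B.charpoly.roots.bind (fun w => (X ^ n - C w).roots) := by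
          rw [Multiset.bind_map]
    rfl
end

section
/- Let λ₁ > 0 ≥ λ₂ ≥ ... ≥ λ_k be real numbers with λ₁ + λ₂ + ... + λ_k ≥ 0. Then there exists a k×k nonnegative real matrix whose eigenvalues (with multiplicity) are exactly λ₁, ..., λ_k. -/
open Matrix Polynomial Finset

lemma my_charpoly_conj {n R : Type*} [Fintype n] [DecidableEq n] [CommRing R]
    (S B T : Matrix n n R) (h : S * T = 1) : (S * B * T).charpoly = B.charpoly := by
  have hmap : S.map (C : R → R[X]) * T.map C = 1 := by
    rw [← Matrix.map_mul, h]
    simp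
  have hcm : charmatrix (S * B * T) = S.map C * charmatrix B * T.map C := by
    unfold Matrix.charmatrix
    rw [Matrix.mul_sub, Matrix.sub_mul]
    congr 1
    · rw [Matrix.mul_assoc, scalar_commute X (fun r => (Commute.all _ _)) (T.map C),
        ← Matrix.mul_assoc, hmap, Matrix.one_mul]
    · simp [RingHom.mapMatrix_apply, Matrix.map_mul]
  unfold Matrix.charpoly
  rw [hcm, Matrix.det_mul, Matrix.det_mul]
  have hdet : (S.map (C : R → R[X])).det * (T.map C).det = 1 := by
    rw [← Matrix.det_mul, hmap, Matrix.det_one]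
  calc (S.map C).det * (charmatrix B).det * (T.map C).det
      = (charmatrix B).det * ((S.map C).det * (T.map C).det) := by ring
    _ = (charmatrix B).det := by rw [hdet, mul_one]

lemma my_charpoly_diagonal {n R : Type*} [Fintype n] [DecidableEq n] [CommRing R]
    (d : n → R) : (Matrix.diagonal d).charpoly = ∏ i, (X - C (d i)) := by
  have : charmatrix (Matrix.diagonal d) = Matrix.diagonal fun i => X - C (d i) := by
    ext i j
    by_cases hij : i = j
    · subst hij; simp [charmatrix_apply_eq]
    · simp [charmatrix_apply_ne _ _ _ hij, Matrix.diagonal_apply_ne _ hij]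
  rw [Matrix.charpoly, this, Matrix.det_diagonal]

/-- Suleimanova's theorem: if `λ 0 > 0 ≥ λ 1 ≥ … ≥ λ (k-1)` and the sum of the `λ i`
is nonnegative, then there is a `k×k` nonnegative real matrix whose complex
eigenvalues, with multiplicity, are exactly the `λ i`. -/
theorem suleimanova (k : ℕ) (hk : 0 < k) (l : Fin k → ℝ)
    (h0 : 0 < l ⟨0, hk⟩) (hneg : ∀ i : Fin k, i ≠ ⟨0, hk⟩ → l i ≤ 0)
    (hmono : Antitone l) (hsum : 0 ≤ ∑ i, l i) :
    ∃ A : Matrix (Fin k) (Fin k) ℝ, (∀ i j, 0 ≤ A i j) ∧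
      (A.map (fun x => (x : ℂ))).charpoly.roots =
        Multiset.map (fun i => ((l i : ℝ) : ℂ)) Finset.univ.val := by
  classical
  set z : Fin k := ⟨0, hk⟩ with hzdef
  set σ : ℝ := ∑ i, l i with hσdef
  have hd : ∀ q, q ≠ z → 0 < l z - l q := fun q hq => sub_pos.2 ((hneg q hq).trans_lt h0)
  have hd' : ∀ q, q ≠ z → l z - l q ≠ 0 := fun q hq => ne_of_gt (hd q hq)
  set A : Matrix (Fin k) (Fin k) ℝ :=
    Matrix.of (fun p q => if q = z then (if p = z then σ else σ - l p)
      else if p = q then 0 else -(l q)) with hA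
  set S : Matrix (Fin k) (Fin k) ℝ :=
    Matrix.of (fun p q => if q = z then 1 else if p = q then -(l z) else -(l q)) with hS
  set T : Matrix (Fin k) (Fin k) ℝ :=
    Matrix.of (fun p q =>
      if p = z then (if q = z then 1 + ∑ m ∈ Finset.univ.erase z, l m / (l z - l m)
        else -(l q) / (l z - l q))
      else if q = z then 1 / (l z - l p)
        else if p = q then -1 / (l z - l p) else 0) with hT
  -- sum over erase
  have hsz : ∑ m ∈ Finset.univ.erase z, l m = σ - l z := by
    have := Finset.add_sum_erase Finset.univ l (Finset.mem_univ z)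
    rw [← hσdef] at this
    linarith
  -- row sums of A
  have hrow : ∀ p, ∑ m, A p m = l z := by
    intro p
    rw [← Finset.add_sum_erase Finset.univ _ (Finset.mem_univ z)]
    have h1 : ∀ m ∈ Finset.univ.erase z, A p m = -(l m) + (if m = p then l p else 0) := by
      intro m hm
      have hm' : m ≠ z := (Finset.mem_erase.1 hm).1
      simp only [hA, Matrix.of_apply, if_neg hm']
      by_cases hpm : p = m
      · subst hpm; simp
      · rw [if_neg hpm, if_neg (fun h => hpm h.symm)]
        simp
    rw [Finset.sum_congr rfl h1, Finset.sum_add_distrib, Finset.sum_neg_distrib]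
    rw [hsz, Finset.sum_ite_eq' (Finset.univ.erase z) p (fun _ => l p)]
    by_cases hp : p = z
    · subst hp
      simp only [hA, Matrix.of_apply, if_pos rfl]
      have : z ∉ Finset.univ.erase z := Finset.notMem_erase _ _
      rw [if_neg this]
      norm_num
    · have hpz : p ∈ Finset.univ.erase z := Finset.mem_erase.2 ⟨hp, Finset.mem_univ p⟩
      simp only [hA, Matrix.of_apply, if_pos rfl, if_neg hp]
      rw [if_pos hpz]
      norm_num
  -- A * S = S * diagonal l
  have hAS : A * S = S * Matrix.diagonal l := by
    ext p q
    rw [Matrix.mul_apply, Matrix.mul_diagonal]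
    by_cases hq : q = z
    · subst hq
      have h1 : ∀ m, S m z = 1 := by
        intro m; simp [hS]
      simp only [h1, mul_one]
      rw [hrow p]
      simp [hS]
    · have h1 : ∀ m, S m q = -(l q) + (if m = q then l q - l z else 0) := by
        intro m
        simp only [hS, Matrix.of_apply, if_neg hq]
        split_ifs with hmq
        · subst hmq; ring
        · ring
      have h2 : ∑ m, A p m * S m q
          = (∑ m, A p m) * (-(l q)) + A p q * (l q - l z) := by
        calc ∑ m, A p m * S m q
            = ∑ m, (A p m * (-(l q)) + (if m = q then A p m * (l q - l z) else 0)) := by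
              apply Finset.sum_congr rfl
              intro m _
              rw [h1 m]
              by_cases hmq : m = q
              · subst hmq; simp; ring
              · rw [if_neg hmq, if_neg hmq]; ring
          _ = (∑ m, A p m) * (-(l q)) + A p q * (l q - l z) := by
              rw [Finset.sum_add_distrib, ← Finset.sum_mul,
                Finset.sum_ite_eq' Finset.univ q (fun m => A p m * (l q - l z)),
                if_pos (Finset.mem_univ q)]
      rw [h2, hrow p]
      by_cases hpq : p = q
      · subst hpq
        simp only [hA, hS, Matrix.of_apply, if_neg hq, if_pos rfl]
        norm_num
      · simp only [hA, hS, Matrix.of_apply, if_neg hq, if_neg hpq]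
        ring
  -- S * T = 1
  have hST : S * T = 1 := by
    ext p q
    rw [Matrix.mul_apply, Matrix.one_apply]
    by_cases hq : q = z
    · subst hq
      rw [← Finset.add_sum_erase Finset.univ (fun m => S p m * T m z) (Finset.mem_univ z)]
      have hSpz : S p z = 1 := by simp [hS]
      have hTzz : T z z = 1 + ∑ m ∈ Finset.univ.erase z, l m / (l z - l m) := by
        simp [hT]
      by_cases hp : p = z
      · subst hp
        have h3 : ∀ m ∈ Finset.univ.erase z, S z m * T m z = -(l m / (l z - l m)) := by
          intro m hm
          have hm' : m ≠ z := (Finset.mem_erase.1 hm).1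
          have hS1 : S z m = -(l m) := by
            simp only [hS, Matrix.of_apply, if_neg hm']
            rw [if_neg (fun h => hm' h.symm)]
          have hT1 : T m z = 1 / (l z - l m) := by
            simp only [hT, Matrix.of_apply, if_neg hm']
            norm_num
          rw [hS1, hT1, mul_one_div, neg_div]
        rw [Finset.sum_congr rfl h3, hSpz, hTzz, if_pos rfl]
        rw [Finset.sum_neg_distrib]
        ring
      · have hpz : p ∈ Finset.univ.erase z := Finset.mem_erase.2 ⟨hp, Finset.mem_univ p⟩
        rw [← Finset.add_sum_erase (Finset.univ.erase z) (fun m => S p m * T m z) hpz]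
        have hE : ∑ m ∈ Finset.univ.erase z, l m / (l z - l m)
            = l p / (l z - l p) + ∑ m ∈ (Finset.univ.erase z).erase p, l m / (l z - l m) := by
          rw [Finset.add_sum_erase (Finset.univ.erase z) (fun m => l m / (l z - l m)) hpz]
        have h3 : ∀ m ∈ (Finset.univ.erase z).erase p,
            S p m * T m z = -(l m / (l z - l m)) := by
          intro m hm
          have hm1 : m ≠ p := (Finset.mem_erase.1 hm).1
          have hm2 : m ≠ z := (Finset.mem_erase.1 (Finset.mem_erase.1 hm).2).1
          have hS1 : S p m = -(l m) := by
            simp only [hS, Matrix.of_apply, if_neg hm2]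
            rw [if_neg (fun h => hm1 h.symm)]
          have hT1 : T m z = 1 / (l z - l m) := by
            simp only [hT, Matrix.of_apply, if_neg hm2]
            norm_num
          rw [hS1, hT1, mul_one_div, neg_div]
        have hSpp : S p p = -(l z) := by
          simp only [hS, Matrix.of_apply, if_neg hp]
          norm_num
        have hTpz : T p z = 1 / (l z - l p) := by
          simp only [hT, Matrix.of_apply, if_neg hp]
          norm_num
        rw [Finset.sum_congr rfl h3, hSpz, hTzz, hE, hSpp, hTpz, if_neg hp]
        rw [Finset.sum_neg_distrib]
        have hdp := hd' p hp
        field_simp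
        ring
    · have hTm : ∀ m, T m q = (if m = z then -(l q) / (l z - l q) else 0)
          + (if m = q then -1 / (l z - l q) else 0) := by
        intro m
        simp only [hT, Matrix.of_apply]
        by_cases hm : m = z
        · subst hm
          rw [if_pos rfl, if_neg hq]
          rw [if_pos rfl, if_neg (fun h : (z : Fin k) = q => hq h.symm)]
          ring
        · rw [if_neg hm, if_neg hm, if_neg hq]
          by_cases hmq : m = q
          · subst hmq
            norm_num
          · rw [if_neg hmq, if_neg hmq]
            ring
      have h4 : ∑ m, S p m * T m q
          = S p z * (-(l q) / (l z - l q)) + S p q * (-1 / (l z - l q)) := by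
        calc ∑ m, S p m * T m q
            = ∑ m, ((if m = z then S p m * (-(l q) / (l z - l q)) else 0)
              + (if m = q then S p m * (-1 / (l z - l q)) else 0)) := by
              apply Finset.sum_congr rfl
              intro m _
              rw [hTm m, mul_add, mul_ite, mul_zero, mul_ite, mul_zero]
          _ = _ := by
              rw [Finset.sum_add_distrib,
                Finset.sum_ite_eq' Finset.univ z (fun m => S p m * (-(l q) / (l z - l q))),
                Finset.sum_ite_eq' Finset.univ q (fun m => S p m * (-1 / (l z - l q))),
                if_pos (Finset.mem_univ z), if_pos (Finset.mem_univ q)]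
      have hSpz : S p z = 1 := by simp [hS]
      rw [h4, hSpz]
      have hdq := hd' q hq
      by_cases hpq : p = q
      · subst hpq
        have : S p p = -(l z) := by
          simp only [hS, Matrix.of_apply, if_neg hq]
          norm_num
        rw [this, if_pos rfl]
        field_simp
        ring
      · have : S p q = -(l q) := by
          simp only [hS, Matrix.of_apply, if_neg hq, if_neg hpq]
        rw [this, if_neg hpq]
        field_simp
        ring
  have hAeq : A = S * Matrix.diagonal l * T := by
    calc A = A * (S * T) := by rw [hST, Matrix.mul_one]
    _ = (A * S) * T := by rw [Matrix.mul_assoc]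
    _ = S * Matrix.diagonal l * T := by rw [hAS]
  refine ⟨A, ?_, ?_⟩
  · intro i j
    simp only [hA, Matrix.of_apply]
    split_ifs with h1 h2 h3
    · exact hsum
    · have := hneg i h2
      linarith
    · exact le_refl 0
    · have := hneg j h1
      linarith
  · have hco : (fun x : ℝ => (x : ℂ)) = ⇑Complex.ofRealHom := rfl
    rw [hco]
    have hmapST : S.map Complex.ofRealHom * T.map Complex.ofRealHom = 1 := by
      rw [← Matrix.map_mul, hST]
      simp
    have hmapA : A.map Complex.ofRealHom
        = S.map Complex.ofRealHom * (Matrix.diagonal l).map Complex.ofRealHom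
          * T.map Complex.ofRealHom := by
      rw [hAeq, Matrix.map_mul, Matrix.map_mul]
    rw [hmapA, my_charpoly_conj _ _ _ hmapST]
    rw [Matrix.diagonal_map (map_zero Complex.ofRealHom), my_charpoly_diagonal]
    have hprod : ∏ i, (X - C (Complex.ofRealHom (l i)))
        = ((Multiset.map (fun i => ((l i : ℝ) : ℂ)) Finset.univ.val).map
            (fun a => X - C a)).prod := by
      rw [Multiset.map_map]
      rfl
    rw [hprod, Polynomial.roots_multiset_prod_X_sub_C]
end

section
/- Let n = 2k+1 ≥ 3 be an odd positive integer. Then there is no n×n doubly stochastic matrix whose spectrum is (1, 0, ..., 0, −1). -/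
open Polynomial Matrix Finset

variable {n : Type*} [Fintype n] [DecidableEq n] {R : Type*} [CommRing R]

lemma my_charpoly_eval (M : Matrix n n R) (r : R) :
    M.charpoly.eval r = (Matrix.scalar n r - M).det := by
  rw [charpoly, eval_det, matPolyEquiv_charmatrix]
  simp

lemma my_charpoly_shift (M : Matrix n n R) (c : R) :
    (M - c • 1).charpoly = M.charpoly.comp (X + C c) := by
  have h : charmatrix (M - c • 1)
      = (charmatrix M).map (eval₂RingHom C (X + C c) : R[X] →+* R[X]) := by
    ext i j
    by_cases h : i = j
    · subst h
      simp [charmatrix_apply_eq, Matrix.sub_apply, Matrix.smul_apply, one_apply]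
      ring
    · simp [charmatrix_apply_ne _ _ _ h, Matrix.sub_apply, Matrix.smul_apply, one_apply, Ne.symm h, h]
  rw [charpoly, h, ← RingHom.mapMatrix_apply, ← RingHom.map_det]
  rfl

lemma my_charpoly_toLin' (M : Matrix n n ℝ) :
    (Matrix.toLin' M).charpoly = M.charpoly := by
  rw [← LinearMap.charpoly_toMatrix (Pi.basisFun ℝ n) (f := Matrix.toLin' M),
    LinearMap.toMatrix_eq_toMatrix', LinearMap.toMatrix'_toLin']


private lemma odd_ds_aux (n k : ℕ) (hn : n = 2 * k + 1) (h3 : 3 ≤ n)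
    (A : Matrix (Fin n) (Fin n) ℝ) (hA : A ∈ doublyStochastic ℝ (Fin n))
    (hr : (A.map (fun x => (x : ℂ))).charpoly.roots =
        (1 : ℂ) ::ₘ (-1 : ℂ) ::ₘ Multiset.replicate (n - 2) (0 : ℂ)) : False := by
  obtain ⟨m, hm⟩ : ∃ m, n = m + 2 := ⟨n - 2, by omega⟩
  -- charpoly over ℝ
  have hmapc : (A.map (fun x => (x : ℂ))) = A.map (algebraMap ℝ ℂ) := rfl
  rw [hmapc] at hr
  have hq : (A.map (algebraMap ℝ ℂ)).charpoly = A.charpoly.map (algebraMap ℝ ℂ) :=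
    Matrix.charpoly_map A (algebraMap ℝ ℂ)
  have hmon : (A.charpoly.map (algebraMap ℝ ℂ)).Monic :=
    A.charpoly_monic.map _
  have hsplit := IsAlgClosed.splits
      (A.charpoly.map (algebraMap ℝ ℂ))
  have hprod := hsplit.eq_prod_roots_of_monic hmon
  rw [← hq, hr, hq] at hprod
  have hn2 : n - 2 = m := by omega
  have hqeq : A.charpoly.map (algebraMap ℝ ℂ)
      = (X - 1) * ((X + 1) * X ^ m) := by
    rw [hprod, hn2]
    simp [Multiset.map_cons, Multiset.prod_cons, Multiset.map_replicate,
      Multiset.prod_replicate]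
  have hp : A.charpoly = (X - 1) * ((X + 1) * X ^ m) := by
    apply Polynomial.map_injective (algebraMap ℝ ℂ) (algebraMap ℝ ℂ).injective
    rw [hqeq]
    simp [Polynomial.map_mul, Polynomial.map_sub, Polynomial.map_add, Polynomial.map_pow]
  -- eigenvector for -1
  have heval : A.charpoly.eval (-1) = 0 := by
    rw [hp]; simp
  have hdet1 : (Matrix.scalar (Fin n) (-1 : ℝ) - A).det = 0 := by
    have := my_charpoly_eval A (-1)
    rw [heval] at this
    exact this.symm
  have hdet : (1 + A).det = 0 := by
    have h2 : (Matrix.scalar (Fin n) (-1 : ℝ) - A) = -(1 + A) := by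
      ext i j
      by_cases h : i = j <;>
        simp [Matrix.scalar_apply, Matrix.add_apply, Matrix.neg_apply, Matrix.one_apply,
          Matrix.diagonal_apply, h]
      ring
    rw [h2, Matrix.det_neg] at hdet1
    have : ((-1 : ℝ)) ^ n ≠ 0 := by positivity
    field_simp at hdet1
    exact (mul_eq_zero.1 hdet1).resolve_left (pow_ne_zero _ (by norm_num))
  obtain ⟨v, hv0, hvA⟩ := (Matrix.exists_mulVec_eq_zero_iff).2 hdet
  have hAv : A *ᵥ v = -v := by
    have : (1 + A) *ᵥ v = v + A *ᵥ v := by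
      rw [Matrix.add_mulVec, Matrix.one_mulVec]
    rw [this] at hvA
    rw [eq_neg_iff_add_eq_zero, add_comm]; exact hvA
  -- doubly stochastic facts
  have hpos : ∀ i j, 0 ≤ A i j := fun i j => nonneg_of_mem_doublyStochastic hA
  have hrow : ∀ i, ∑ j, A i j = 1 := sum_row_of_mem_doublyStochastic hA
  have hcol : ∀ j, ∑ i, A i j = 1 := sum_col_of_mem_doublyStochastic hA
  have hAvi : ∀ i, ∑ j, A i j * v j = -v i := by
    intro i
    have := congrFun hAv i
    simpa [Matrix.mulVec, dotProduct] using this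
  -- the equality-case identity
  have hsum : ∑ i, ∑ j, A i j * (v i + v j) ^ 2 = 0 := by
    have expand : ∀ i j : Fin n, A i j * (v i + v j) ^ 2
        = A i j * v i ^ 2 + (2 * (v i * (A i j * v j)) + A i j * v j ^ 2) := by
      intro i j; ring
    have e1 : ∑ i, ∑ j, A i j * v i ^ 2 = ∑ i, v i ^ 2 := by
      refine Finset.sum_congr rfl fun i _ => ?_
      rw [← Finset.sum_mul, hrow i, one_mul]
    have e2 : ∑ i, ∑ j, 2 * (v i * (A i j * v j)) = -(2 * ∑ i, v i ^ 2) := by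
      have h0 : ∀ i : Fin n, ∑ j, 2 * (v i * (A i j * v j)) = 2 * (v i * ∑ j, A i j * v j) :=
        fun i => by rw [Finset.mul_sum, Finset.mul_sum]
      simp_rw [h0, hAvi]
      have h1 : ∀ x : Fin n, 2 * (v x * -v x) = -(2 * v x ^ 2) := fun x => by ring
      simp_rw [h1, Finset.sum_neg_distrib, Finset.mul_sum]
    have e3 : ∑ i : Fin n, ∑ j, A i j * v j ^ 2 = ∑ i, v i ^ 2 := by
      rw [Finset.sum_comm]
      refine Finset.sum_congr rfl fun j _ => ?_
      rw [← Finset.sum_mul, hcol j, one_mul]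
    calc ∑ i, ∑ j, A i j * (v i + v j) ^ 2
        = ∑ i, ∑ j, (A i j * v i ^ 2 + (2 * (v i * (A i j * v j)) + A i j * v j ^ 2)) := by
          simp_rw [expand]
      _ = (∑ i, ∑ j, A i j * v i ^ 2) + ((∑ i, ∑ j, 2 * (v i * (A i j * v j)))
            + (∑ i, ∑ j, A i j * v j ^ 2)) := by
          simp_rw [Finset.sum_add_distrib]
      _ = 0 := by rw [e1, e2, e3]; ring
  have hterm : ∀ i j, A i j * (v i + v j) ^ 2 = 0 := by
    have hnn : ∀ i ∈ Finset.univ, (0:ℝ) ≤ ∑ j, A i j * (v i + v j) ^ 2 := fun i _ =>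
      Finset.sum_nonneg fun j _ => mul_nonneg (hpos i j) (sq_nonneg _)
    intro i j
    have h1 := (Finset.sum_eq_zero_iff_of_nonneg hnn).1 hsum i (Finset.mem_univ i)
    exact (Finset.sum_eq_zero_iff_of_nonneg
      (fun j _ => mul_nonneg (hpos i j) (sq_nonneg _))).1 h1 j (Finset.mem_univ j)
  have hkey : ∀ i j, A i j ≠ 0 → v j = -v i := by
    intro i j hne
    have := hterm i j
    rcases mul_eq_zero.1 this with h | h
    · exact absurd h hne
    · have := pow_eq_zero_iff (n := 2) (by norm_num) |>.1 h
      linarith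
  -- indicator of the zero set of v is a fixed vector
  set x : Fin n → ℝ := fun i => if v i = 0 then 1 else 0 with hxdef
  have hx : A *ᵥ x = x := by
    funext i
    show ∑ j, A i j * x j = x i
    by_cases hvi : v i = 0
    · have h1 : ∀ j, A i j * x j = A i j := by
        intro j
        by_cases hvj : v j = 0
        · simp [hxdef, hvj]
        · have hz : A i j = 0 := by
            by_contra hne
            exact hvj (by rw [hkey i j hne, hvi, neg_zero])
          simp [hxdef, hvj, hz]
      simp_rw [h1]
      rw [hrow i]
      simp [hxdef, hvi]
    · have h1 : ∀ j, A i j * x j = 0 := by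
        intro j
        by_cases hvj : v j = 0
        · have hz : A i j = 0 := by
            by_contra hne
            have := hkey i j hne
            rw [hvj] at this
            exact hvi (by linarith)
          simp [hz]
        · simp [hxdef, hvj]
      simp only [h1, Finset.sum_const_zero]; simp [hxdef, hvi]
  -- some coordinate of v is zero (parity argument)
  have hzero : ∃ i, v i = 0 := by
    by_contra hc
    push_neg at hc
    set P : Finset (Fin n) := Finset.univ.filter (fun i => 0 < v i) with hP
    set N : Finset (Fin n) := Finset.univ.filter (fun i => v i < 0) with hN
    have hPsum : ∀ i ∈ P, ∑ j ∈ N, A i j = 1 := by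
      intro i hi
      have hvi : 0 < v i := by simpa [hP] using hi
      have : ∑ j ∈ N, A i j = ∑ j, A i j := by
        apply Finset.sum_subset (Finset.subset_univ N)
        intro j _ hj
        by_contra hne
        have hvj := hkey i j hne
        exact hj (by simp [hN]; linarith)
      rw [this, hrow i]
    have hNsum : ∀ j ∈ N, ∑ i ∈ P, A i j = 1 := by
      intro j hj
      have hvj : v j < 0 := by simpa [hN] using hj
      have : ∑ i ∈ P, A i j = ∑ i, A i j := by
        apply Finset.sum_subset (Finset.subset_univ P)
        intro i _ hi
        by_contra hne
        have := hkey i j hne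
        exact hi (by simp [hP]; linarith)
      rw [this, hcol j]
    have hPN : (P.card : ℝ) = (N.card : ℝ) := by
      have h1 : ∑ i ∈ P, ∑ j ∈ N, A i j = (P.card : ℝ) := by
        rw [Finset.sum_congr rfl hPsum]; simp
      have h2 : ∑ j ∈ N, ∑ i ∈ P, A i j = (N.card : ℝ) := by
        rw [Finset.sum_congr rfl hNsum]; simp
      rw [← h1, ← h2, Finset.sum_comm]
    have hPNc : P.card = N.card := Nat.cast_injective hPN
    have hdisj : Disjoint P N := by
      rw [Finset.disjoint_filter]
      intro i _ h1
      simp only [not_lt]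
      linarith
    have huniv : P ∪ N = Finset.univ := by
      ext i
      simp only [Finset.mem_union, hP, hN, Finset.mem_filter, Finset.mem_univ, true_and,
        iff_true]
      rcases (hc i).lt_or_gt with h | h
      · exact Or.inr h
      · exact Or.inl h
    have hcard : P.card + N.card = n := by
      rw [← Finset.card_union_of_disjoint hdisj, huniv, Finset.card_univ, Fintype.card_fin]
    omega
  obtain ⟨i0, hi0⟩ := hzero
  have hnonzero : ∃ i, v i ≠ 0 := by
    by_contra hc
    push_neg at hc
    exact hv0 (funext fun i => hc i)
  obtain ⟨i1, hi1⟩ := hnonzero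
  -- the eigenspace of 1 is at least 2-dimensional
  set φ : Module.End ℝ (Fin n → ℝ) := Matrix.toLin' (A - 1) with hφ
  have hxker : x ∈ LinearMap.ker φ := by
    rw [LinearMap.mem_ker, hφ, Matrix.toLin'_apply, Matrix.sub_mulVec, Matrix.one_mulVec, hx,
      sub_self]
  have huker : (1 : Fin n → ℝ) ∈ LinearMap.ker φ := by
    rw [LinearMap.mem_ker, hφ, Matrix.toLin'_apply, Matrix.sub_mulVec, Matrix.one_mulVec,
      mulVec_one_of_mem_doublyStochastic hA, sub_self]
  have hxne : x ≠ 0 := by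
    intro h
    have : x i0 = 0 := by rw [h]; rfl
    rw [hxdef] at this
    simp [hi0] at this
  have hind : LinearIndependent ℝ ![(1 : Fin n → ℝ), x] := by
    rw [linearIndependent_fin2]
    refine ⟨by simpa using hxne, fun a h => ?_⟩
    have := congrFun h i1
    simp [hxdef, hi1] at this
  set w : Fin 2 → LinearMap.ker φ := ![⟨1, huker⟩, ⟨x, hxker⟩] with hw
  have hcomp : (LinearMap.ker φ).subtype ∘ w = ![(1 : Fin n → ℝ), x] := by
    funext i
    fin_cases i <;> rfl
  have hindw : LinearIndependent ℝ w :=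
    LinearIndependent.of_comp (LinearMap.ker φ).subtype (by rw [hcomp]; exact hind)
  have h2le : 2 ≤ Module.finrank ℝ (LinearMap.ker φ) := by
    simpa using hindw.fintype_card_le_finrank
  -- but the generalized eigenspace for 0 of φ has dimension 1
  have hle : LinearMap.ker φ ≤ φ.maxGenEigenspace 0 := by
    intro z hz
    rw [Module.End.mem_maxGenEigenspace]
    exact ⟨1, by simpa using LinearMap.mem_ker.mp hz⟩
  have hcharφ : φ.charpoly = X * ((X + 2) * (X + 1) ^ m) := by
    rw [hφ, my_charpoly_toLin']
    have : A - 1 = A - (1 : ℝ) • 1 := by rw [one_smul]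
    rw [this, my_charpoly_shift, hp]
    simp only [mul_comp, sub_comp, add_comp, X_comp, one_comp, pow_comp, Polynomial.C_1]
    ring
  have hnat : natTrailingDegree φ.charpoly = 1 := by
    rw [hcharφ]
    have hr0 : ((X + 2) * (X + 1) ^ m : ℝ[X]).coeff 0 ≠ 0 := by
      rw [Polynomial.coeff_zero_eq_eval_zero]
      simp
    have hrne : ((X + 2) * (X + 1) ^ m : ℝ[X]) ≠ 0 := fun h => by simp [h] at hr0
    rw [natTrailingDegree_mul Polynomial.X_ne_zero hrne, Polynomial.natTrailingDegree_X,
      Polynomial.natTrailingDegree_eq_zero.2 (Or.inr hr0)]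
  have hfr : Module.finrank ℝ (φ.maxGenEigenspace 0) = 1 := by
    rw [LinearMap.finrank_maxGenEigenspace_zero_eq, hnat]
  have := Submodule.finrank_mono hle
  rw [hfr] at this
  omega


/-- For odd `n = 2k + 1 ≥ 3`, the list `(1, 0, …, 0, −1)` is not the spectrum of any
`n×n` doubly stochastic matrix. -/
theorem odd_not_doublyStochastic_spectrum (n k : ℕ) (hn : n = 2 * k + 1) (h3 : 3 ≤ n) :
    ¬ ∃ A : Matrix (Fin n) (Fin n) ℝ, A ∈ doublyStochastic ℝ (Fin n) ∧
      (A.map (fun x => (x : ℂ))).charpoly.roots =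
        (1 : ℂ) ::ₘ (-1 : ℂ) ::ₘ Multiset.replicate (n - 2) (0 : ℂ) := by
  rintro ⟨A, hA, hr⟩
  exact odd_ds_aux n k hn h3 A hA hr
end

section
/- Let k > 1 and n ≥ 1 be integers and let w = e^{2πi/k}. Then there exists a kn×kn doubly stochastic matrix whose spectrum is {1, w, w², ..., w^{k-1}} together with 0 with multiplicity kn − k. Specifically, the block matrix with I_k in block positions (i,i+1) for i = 1,...,n−1 and J_k (the k×k matrix with all entries 1/k) in block position (n,1) has this spectrum. -/
open Complex

open Matrix Polynomial Finset Kronecker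

noncomputable section

-- geometric sum of root of unity
lemma sum_pow_fin {m : ℕ} (hm : 0 < m) (x : ℂ) (hxm : x ^ m = 1) :
    ∑ b : Fin m, x ^ (b : ℕ) = if x = 1 then (m : ℂ) else 0 := by
  rw [Fin.sum_univ_eq_sum_range]
  split_ifs with h
  · simp [h]
  · rw [geom_sum_eq h, hxm]; simp

-- DFT inverse
lemma dft_mul_dftInv {m : ℕ} (hm : 0 < m) {ζ : ℂ} (hζ : IsPrimitiveRoot ζ m) :
    (Matrix.of fun a b : Fin m => ζ ^ ((a : ℕ) * (b : ℕ))) *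
      (Matrix.of fun a b : Fin m => (m : ℂ)⁻¹ * (ζ⁻¹) ^ ((a : ℕ) * (b : ℕ))) = 1 := by
  have hζ0 : ζ ≠ 0 := hζ.ne_zero hm.ne'
  ext a c
  have key : ∀ b : Fin m, ζ ^ ((a : ℕ) * b) * ((m : ℂ)⁻¹ * (ζ⁻¹) ^ ((b : ℕ) * c)) =
      (m : ℂ)⁻¹ * (ζ ^ (a : ℕ) * (ζ⁻¹) ^ (c : ℕ)) ^ (b : ℕ) := by
    intro b
    rw [mul_pow, ← pow_mul, ← pow_mul]
    ring_nf
  have hx : (ζ ^ (a : ℕ) * (ζ⁻¹) ^ (c : ℕ)) ^ m = 1 := by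
    rw [mul_pow, ← pow_mul, ← pow_mul, mul_comm (a : ℕ) m, mul_comm (c : ℕ) m, pow_mul, pow_mul,
      hζ.pow_eq_one, inv_pow, hζ.pow_eq_one]
    simp
  have hone : (ζ ^ (a : ℕ) * (ζ⁻¹) ^ (c : ℕ)) = 1 ↔ a = c := by
    rw [inv_pow, mul_inv_eq_one₀ (pow_ne_zero _ hζ0)]
    exact ⟨fun h => Fin.ext (hζ.pow_inj a.isLt c.isLt h), fun h => by rw [h]⟩
  rw [Matrix.mul_apply, Matrix.one_apply]
  simp only [Matrix.of_apply]
  rw [show ∀ s : Finset (Fin m), (∑ b ∈ s, ζ ^ ((a:ℕ) * b) * ((m : ℂ)⁻¹ * (ζ⁻¹) ^ ((b:ℕ) * c)))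
      = ∑ b ∈ s, (m : ℂ)⁻¹ * (ζ ^ (a : ℕ) * (ζ⁻¹) ^ (c : ℕ)) ^ (b : ℕ) from
    fun s => Finset.sum_congr rfl fun b _ => key b, ← Finset.mul_sum, sum_pow_fin hm _ hx]
  by_cases h : a = c
  · rw [if_pos (hone.mpr h), if_pos h, inv_mul_cancel₀ (by exact_mod_cast hm.ne')]
  · rw [if_neg (fun hh => h (hone.mp hh)), if_neg h, mul_zero]

-- similarity invariance of charpoly
lemma charpoly_conj {ι : Type*} [Fintype ι] [DecidableEq ι]
    (U W D : Matrix ι ι ℂ) (h : U * W = 1) :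
    (U * D * W).charpoly = D.charpoly := by
  have hmap : ∀ A B : Matrix ι ι ℂ,
      (A * B).map (Polynomial.C) = A.map Polynomial.C * B.map Polynomial.C :=
    fun A B => Matrix.map_mul
  have h1 : U.map Polynomial.C * W.map Polynomial.C = 1 := by
    rw [← hmap, h, Matrix.map_one _ (map_zero _) (map_one _)]
  have hsc : Matrix.scalar ι (Polynomial.X (R := ℂ)) =
      U.map Polynomial.C * Matrix.scalar ι Polynomial.X * W.map Polynomial.C := by
    rw [← (Matrix.scalar_commute Polynomial.X (fun r => Commute.all _ _)
        (U.map Polynomial.C)).eq, mul_assoc, h1, mul_one]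
  have hcm : charmatrix (U * D * W) =
      (U.map Polynomial.C) * charmatrix D * (W.map Polynomial.C) := by
    simp only [charmatrix, RingHom.mapMatrix_apply]
    rw [Matrix.mul_sub, Matrix.sub_mul, hmap, hmap, ← hsc]
  have hdet : (U.map Polynomial.C).det * (W.map Polynomial.C).det = 1 := by
    rw [← Matrix.det_mul, h1, Matrix.det_one]
  rw [Matrix.charpoly, Matrix.charpoly, hcm, Matrix.det_mul, Matrix.det_mul]
  rw [mul_comm ((U.map Polynomial.C).det), mul_assoc, hdet, mul_one]

lemma charpoly_diag {ι : Type*} [Fintype ι] [DecidableEq ι] (d : ι → ℂ) :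
    (Matrix.diagonal d).charpoly = ∏ i, (Polynomial.X - Polynomial.C (d i)) := by
  have : charmatrix (Matrix.diagonal d) =
      Matrix.diagonal (fun i => Polynomial.X - Polynomial.C (d i)) := by
    ext i j
    by_cases h : i = j
    · subst h; simp
    · simp [h, Matrix.diagonal_apply_ne _ h]
  rw [Matrix.charpoly, this, Matrix.det_diagonal]

lemma pow_congr_mod {m : ℕ} {ζ : ℂ} (hζm : ζ ^ m = 1) {e e' : ℕ} (h : e ≡ e' [MOD m]) :
    ζ ^ e = ζ ^ e' := by
  have key : ∀ e : ℕ, ζ ^ e = ζ ^ (e % m) := fun e => by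
    conv_lhs => rw [← Nat.div_add_mod e m]
    rw [pow_add, pow_mul, hζm, one_pow, one_mul]
  rw [key e, key e']
  exact congrArg _ h

lemma cycle_eigen {m : ℕ} [NeZero m] {ζ : ℂ} (hζm : ζ ^ m = 1) :
    (Matrix.of fun a b : Fin m => if b = a + 1 then (1 : ℂ) else 0) *
      (Matrix.of fun a b : Fin m => ζ ^ ((a : ℕ) * (b : ℕ))) =
    (Matrix.of fun a b : Fin m => ζ ^ ((a : ℕ) * (b : ℕ))) *
      Matrix.diagonal (fun b : Fin m => ζ ^ (b : ℕ)) := by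
  ext a c
  rw [Matrix.mul_apply, Matrix.mul_diagonal]
  simp only [Matrix.of_apply, ite_mul, one_mul, zero_mul]
  rw [Finset.sum_ite_eq' Finset.univ (a + 1) (fun b : Fin m => ζ ^ ((b : ℕ) * (c : ℕ))),
    if_pos (Finset.mem_univ _), ← pow_add]
  refine pow_congr_mod hζm ?_
  have h2 : ((a + 1 : Fin m) : ℕ) ≡ (a : ℕ) + 1 [MOD m] := by
    rw [Fin.add_def, Fin.val_one']
    exact (Nat.mod_modEq _ m).trans (Nat.ModEq.add_left _ (Nat.mod_modEq 1 m))
  have := h2.mul_right (c : ℕ)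
  rwa [Nat.succ_mul] at this

lemma ones_eigen {m : ℕ} [NeZero m] {ζ : ℂ} (hζ : IsPrimitiveRoot ζ m) :
    (Matrix.of fun _ _ : Fin m => (m : ℂ)⁻¹) *
      (Matrix.of fun a b : Fin m => ζ ^ ((a : ℕ) * (b : ℕ))) =
    (Matrix.of fun a b : Fin m => ζ ^ ((a : ℕ) * (b : ℕ))) *
      Matrix.diagonal (fun b : Fin m => if b = 0 then (1 : ℂ) else 0) := by
  have hm : 0 < m := Nat.pos_of_ne_zero (NeZero.ne m)
  ext a c
  rw [Matrix.mul_apply, Matrix.mul_diagonal]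
  simp only [Matrix.of_apply]
  have hxm : (ζ ^ (c : ℕ)) ^ m = 1 := by
    rw [← pow_mul, mul_comm, pow_mul, hζ.pow_eq_one, one_pow]
  have : ∀ b : Fin m, (m : ℂ)⁻¹ * ζ ^ ((b : ℕ) * (c : ℕ)) =
      (m : ℂ)⁻¹ * (ζ ^ (c : ℕ)) ^ (b : ℕ) := by
    intro b; rw [← pow_mul, mul_comm (c : ℕ)]
  rw [Finset.sum_congr rfl fun b _ => this b, ← Finset.mul_sum, sum_pow_fin hm _ hxm]
  by_cases h : c = 0
  · subst h
    simp [inv_mul_cancel₀ (show (m : ℂ) ≠ 0 by exact_mod_cast hm.ne')]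
  · have : ζ ^ (c : ℕ) ≠ 1 := fun hh => h (Fin.ext (hζ.pow_inj c.isLt hm hh))
    simp [h, this]

lemma bind_replicate {α β : Type*} (s : Multiset α) (m : ℕ) (c : β) :
    (s.bind fun _ => Multiset.replicate m c) = Multiset.replicate (Multiset.card s * m) c := by
  induction s using Multiset.induction with
  | empty => simp
  | cons a s ih =>
      rw [Multiset.cons_bind, ih, Multiset.card_cons, add_mul, one_mul, add_comm,
        Multiset.replicate_add]

lemma fin_univ_val_map_pow (k : ℕ) (ω : ℂ) :
    (Finset.univ : Finset (Fin k)).val.map (fun b : Fin k => ω ^ (b : ℕ)) =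
      (Multiset.range k).map (fun j => ω ^ j) := by
  have h1 : (Finset.univ : Finset (Fin k)).val.map Fin.val = Multiset.range k := by
    have := congrArg Finset.val (Fin.map_valEmbedding_univ (n := k))
    rwa [Finset.map_val, Nat.Iio_eq_range, Finset.range_val] at this
  rw [← h1, Multiset.map_map]
  rfl

lemma multiset_spectrum (k n : ℕ) [NeZero n] (hk0 : 0 < k) (hn0 : 0 < n) (ω : ℂ) :
    (Finset.univ : Finset (Fin k × Fin n)).val.map
        (fun x : Fin k × Fin n => ω ^ (x.1 : ℕ) * (if x.2 = 0 then (1 : ℂ) else 0)) =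
      (Multiset.range k).map (fun j => ω ^ j) + Multiset.replicate (k * n - k) 0 := by
  have hprod : (Finset.univ : Finset (Fin k × Fin n)).val =
      (Finset.univ : Finset (Fin k)).val.bind
        (fun b => (Finset.univ : Finset (Fin n)).val.map (Prod.mk b)) := by
    rw [← Finset.univ_product_univ, Finset.product_val]
    rfl
  rw [hprod, Multiset.map_bind]
  have hinner : ∀ b : Fin k,
      ((Finset.univ : Finset (Fin n)).val.map
        ((fun x : Fin k × Fin n => ω ^ (x.1 : ℕ) * (if x.2 = 0 then (1 : ℂ) else 0)) ∘
          Prod.mk b)) = ({ω ^ (b : ℕ)} : Multiset ℂ) + Multiset.replicate (n - 1) 0 := by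
    intro b
    have h0 : (Finset.univ : Finset (Fin n)).val =
        0 ::ₘ ((Finset.univ : Finset (Fin n)).erase 0).val := by
      rw [Finset.erase_val]
      exact (Multiset.cons_erase
        (show (0 : Fin n) ∈ (Finset.univ : Finset (Fin n)).val from Finset.mem_val.mpr (Finset.mem_univ (0 : Fin n)))).symm
    rw [h0, Multiset.map_cons]
    rw [Multiset.map_congr rfl (fun p hp => show _ = (0 : ℂ) by
      have hp0 : p ≠ 0 := (Finset.mem_erase.mp (Finset.mem_val.mp hp)).1
      simp [hp0])]
    rw [Multiset.map_const']
    have hcard : Multiset.card ((Finset.univ : Finset (Fin n)).erase 0).val = n - 1 := by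
      rw [← Finset.card_def, Finset.card_erase_of_mem (Finset.mem_univ 0), Finset.card_univ,
        Fintype.card_fin]
    rw [hcard, ← Multiset.singleton_add]
    simp
  simp only [Multiset.map_map]
  rw [Multiset.bind_congr (fun b _ => hinner b), Multiset.bind_add, Multiset.bind_singleton,
    bind_replicate, fin_univ_val_map_pow]
  congr 1
  · congr 1
    rw [← Finset.card_def, Finset.card_univ, Fintype.card_fin]
    cases n with
    | zero => omega
    | succ m => rw [Nat.mul_succ, Nat.succ_sub_one, Nat.add_sub_cancel]

end

/-- For `k > 1`, `n ≥ 1` and `w = e^{2πi/k}` a primitive `k`-th root of unity, there is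
a `kn × kn` doubly stochastic matrix whose spectrum is `{1, w, w², …, w^{k-1}}`
together with `0` of multiplicity `kn − k`. -/
theorem roots_of_unity_doublyStochastic_spectrum (k n : ℕ) (hk : 1 < k) (hn : 1 ≤ n) :
    ∃ M : Matrix (Fin (k * n)) (Fin (k * n)) ℝ, M ∈ doublyStochastic ℝ (Fin (k * n)) ∧
      (M.map (fun x => (x : ℂ))).charpoly.roots =
        (Multiset.range k).map (fun j => Complex.exp (2 * Real.pi * Complex.I / k) ^ j) +
          Multiset.replicate (k * n - k) (0 : ℂ) := by
  have hk0 : 0 < k := by omega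
  have hn0 : 0 < n := hn
  haveI : NeZero k := ⟨hk0.ne'⟩
  haveI : NeZero n := ⟨hn0.ne'⟩
  set ω : ℂ := Complex.exp (2 * Real.pi * Complex.I / k) with hωdef
  set μ : ℂ := Complex.exp (2 * Real.pi * Complex.I / n) with hμdef
  have hω : IsPrimitiveRoot ω k := Complex.isPrimitiveRoot_exp k hk0.ne'
  have hμ : IsPrimitiveRoot μ n := Complex.isPrimitiveRoot_exp n hn0.ne'
  set e : Fin k × Fin n ≃ Fin (k * n) := finProdFinEquiv with hedef
  set M₀ : Matrix (Fin k × Fin n) (Fin k × Fin n) ℝ :=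
    Matrix.of fun x y => if y.1 = x.1 + 1 then (n : ℝ)⁻¹ else 0 with hM₀def
  refine ⟨Matrix.reindex e e M₀, ?_, ?_⟩
  · -- doubly stochastic
    rw [mem_doublyStochastic_iff_sum]
    have hnR : (0 : ℝ) < n := by exact_mod_cast hn0
    refine ⟨fun i j => ?_, fun i => ?_, fun j => ?_⟩
    · simp only [Matrix.reindex_apply, Matrix.submatrix_apply, hM₀def, Matrix.of_apply]
      split <;> positivity
    · simp only [Matrix.reindex_apply, Matrix.submatrix_apply]
      refine (Fintype.sum_equiv e.symm _ (fun y => M₀ (e.symm i) y) fun j => rfl).trans ?_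
      rw [Fintype.sum_prod_type]
      simp only [hM₀def, Matrix.of_apply]
      rw [Finset.sum_comm]
      simp [Finset.sum_ite_eq', Finset.card_univ, mul_inv_cancel₀ hnR.ne']
    · simp only [Matrix.reindex_apply, Matrix.submatrix_apply]
      refine (Fintype.sum_equiv e.symm _ (fun x => M₀ x (e.symm j)) fun i => rfl).trans ?_
      rw [Fintype.sum_prod_type]
      simp only [hM₀def, Matrix.of_apply]
      have hcond : ∀ b : Fin k, ((e.symm j).1 = b + 1) ↔ (b = (e.symm j).1 - 1) := by
        intro b
        constructor
        · intro h; rw [h, add_sub_cancel_right]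
        · intro h; rw [h, sub_add_cancel]
      simp only [hcond]
      rw [Finset.sum_comm]
      simp [Finset.sum_ite_eq', Finset.card_univ, mul_inv_cancel₀ hnR.ne']
  · set P : Matrix (Fin k) (Fin k) ℂ := (Matrix.of fun a b => if b = a + 1 then (1 : ℂ) else 0) with hPdef
    set Jm : Matrix (Fin n) (Fin n) ℂ := (Matrix.of fun _ _ => (n : ℂ)⁻¹) with hJmdef
    set Fk : Matrix (Fin k) (Fin k) ℂ := Matrix.of fun a b => ω ^ ((a : ℕ) * (b : ℕ))
    set Fki : Matrix (Fin k) (Fin k) ℂ :=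
      Matrix.of fun a b => (k : ℂ)⁻¹ * (ω⁻¹) ^ ((a : ℕ) * (b : ℕ))
    set Fn : Matrix (Fin n) (Fin n) ℂ := Matrix.of fun a b => μ ^ ((a : ℕ) * (b : ℕ))
    set Fni : Matrix (Fin n) (Fin n) ℂ :=
      Matrix.of fun a b => (n : ℂ)⁻¹ * (μ⁻¹) ^ ((a : ℕ) * (b : ℕ))
    set Dk : Matrix (Fin k) (Fin k) ℂ := Matrix.diagonal fun b : Fin k => ω ^ (b : ℕ)
    set En : Matrix (Fin n) (Fin n) ℂ :=
      Matrix.diagonal fun p : Fin n => if p = 0 then (1 : ℂ) else 0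
    have hUW : (Fk ⊗ₖ Fn) * (Fki ⊗ₖ Fni) = 1 := by
      rw [← Matrix.mul_kronecker_mul, dft_mul_dftInv hk0 hω, dft_mul_dftInv hn0 hμ,
        Matrix.one_kronecker_one]
    have hMU : (P ⊗ₖ Jm) * (Fk ⊗ₖ Fn) = (Fk ⊗ₖ Fn) * (Dk ⊗ₖ En) := by
      rw [← Matrix.mul_kronecker_mul, ← Matrix.mul_kronecker_mul, cycle_eigen hω.pow_eq_one,
        ones_eigen hμ]
    have hMc : (P ⊗ₖ Jm) = (Fk ⊗ₖ Fn) * (Dk ⊗ₖ En) * (Fki ⊗ₖ Fni) := by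
      calc P ⊗ₖ Jm = (P ⊗ₖ Jm) * ((Fk ⊗ₖ Fn) * (Fki ⊗ₖ Fni)) := by rw [hUW, mul_one]
        _ = ((P ⊗ₖ Jm) * (Fk ⊗ₖ Fn)) * (Fki ⊗ₖ Fni) := by rw [mul_assoc]
        _ = _ := by rw [hMU]
    have hmapc : (Matrix.reindex e e M₀).map (fun x : ℝ => (x : ℂ)) =
        Matrix.reindex e e (P ⊗ₖ Jm) := by
      ext i j
      simp only [Matrix.map_apply, Matrix.reindex_apply, Matrix.submatrix_apply, hM₀def, hPdef,
        hJmdef, Matrix.of_apply, Matrix.kroneckerMap_apply]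
      split_ifs <;> simp [Complex.ofReal_inv]
    have hdiag : Dk ⊗ₖ En = Matrix.diagonal
        (fun x : Fin k × Fin n => ω ^ (x.1 : ℕ) * (if x.2 = 0 then (1 : ℂ) else 0)) := by
      rw [Matrix.diagonal_kronecker_diagonal]
    rw [hmapc, Matrix.charpoly_reindex, hMc, charpoly_conj _ _ _ hUW, hdiag, charpoly_diag]
    rw [Finset.prod_eq_multiset_prod,
      show (fun i : Fin k × Fin n =>
          Polynomial.X - Polynomial.C (ω ^ (i.1 : ℕ) * if i.2 = 0 then (1 : ℂ) else 0)) =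
        (fun a : ℂ => Polynomial.X - Polynomial.C a) ∘
          (fun i : Fin k × Fin n => ω ^ (i.1 : ℕ) * if i.2 = 0 then (1 : ℂ) else 0) from rfl,
      ← Multiset.map_map, Polynomial.roots_multiset_prod_X_sub_C]
    exact multiset_spectrum k n hk0 hn0 ω
end

section
/- Let real numbers λ, μ satisfy −1 ≤ λ ≤ 1, −1 ≤ μ ≤ 1, λ + 3μ + 2 ≥ 0, and 3λ + μ + 2 ≥ 0. Then there exists a symmetric 3×3 doubly stochastic matrix with eigenvalues 1, λ, μ. In particular, when λ ≥ μ, the matrix (1/6)·[[2+4λ, 2−2λ, 2−2λ],[2−2λ, 2+λ+3μ, 2+λ−3μ],[2−2λ, 2+λ−3μ, 2+λ+3μ]] realizes this spectrum. -/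
open Polynomial Matrix

noncomputable def Mat (l m : ℝ) : Matrix (Fin 3) (Fin 3) ℝ :=
  (1 / 6 : ℝ) • !![2 + 4 * l, 2 - 2 * l, 2 - 2 * l;
      2 - 2 * l, 2 + l + 3 * m, 2 + l - 3 * m;
      2 - 2 * l, 2 + l - 3 * m, 2 + l + 3 * m]

lemma Mat_symm (l m : ℝ) : (Mat l m).IsSymm := by
  ext i j
  fin_cases i <;> fin_cases j <;>
    simp [Mat, Matrix.IsSymm, Matrix.vecHead, Matrix.vecTail]

lemma Mat_charpoly (l m : ℝ) :
    (Mat l m).charpoly = (X - C 1) * (X - C l) * (X - C m) := by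
  rw [Matrix.charpoly, Matrix.det_fin_three]
  apply Polynomial.funext
  intro x
  simp [charmatrix_apply, Mat, Matrix.one_apply, Matrix.vecHead, Matrix.vecTail]
  ring

lemma Mat_roots (l m : ℝ) : (Mat l m).charpoly.roots = {1, l, m} := by
  rw [Mat_charpoly,
    Polynomial.roots_mul (mul_ne_zero (mul_ne_zero (X_sub_C_ne_zero _) (X_sub_C_ne_zero _)) (X_sub_C_ne_zero _)),
    Polynomial.roots_mul (mul_ne_zero (X_sub_C_ne_zero _) (X_sub_C_ne_zero _)),
    roots_X_sub_C, roots_X_sub_C, roots_X_sub_C]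
  rfl

lemma Mat_mem (l m : ℝ) (h2 : l ≤ 1) (h5 : 0 ≤ l + 3 * m + 2) (hml : m ≤ l)
    (h6 : 0 ≤ 3 * l + m + 2) :
    Mat l m ∈ doublyStochastic ℝ (Fin 3) := by
  rw [mem_doublyStochastic_iff_sum]
  refine ⟨fun i j => ?_, fun i => ?_, fun j => ?_⟩
  · fin_cases i <;> fin_cases j <;>
      simp [Mat, Matrix.vecHead, Matrix.vecTail] <;> linarith
  · fin_cases i <;>
      simp [Mat, Fin.sum_univ_three, Matrix.vecHead, Matrix.vecTail] <;> ring
  · fin_cases j <;>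
      simp [Mat, Fin.sum_univ_three, Matrix.vecHead, Matrix.vecTail] <;> ring

/-- If `−1 ≤ λ, μ ≤ 1`, `λ + 3μ + 2 ≥ 0` and `3λ + μ + 2 ≥ 0`, then there is a
symmetric `3×3` doubly stochastic matrix with eigenvalues `1, λ, μ`; when `λ ≥ μ`
the explicit matrix `(1/6)·[[2+4λ, 2−2λ, 2−2λ], [2−2λ, 2+λ+3μ, 2+λ−3μ],
[2−2λ, 2+λ−3μ, 2+λ+3μ]]` realizes this spectrum. -/
theorem three_by_three_symm_doublyStochastic_spectrum (l m : ℝ)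
    (h1 : -1 ≤ l) (h2 : l ≤ 1) (h3 : -1 ≤ m) (h4 : m ≤ 1)
    (h5 : 0 ≤ l + 3 * m + 2) (h6 : 0 ≤ 3 * l + m + 2) :
    (∃ A : Matrix (Fin 3) (Fin 3) ℝ, A.IsSymm ∧ A ∈ doublyStochastic ℝ (Fin 3) ∧
        A.charpoly.roots = {1, l, m}) ∧
    (m ≤ l →
      ((1 / 6 : ℝ) • !![2 + 4 * l, 2 - 2 * l, 2 - 2 * l;
          2 - 2 * l, 2 + l + 3 * m, 2 + l - 3 * m;
          2 - 2 * l, 2 + l - 3 * m, 2 + l + 3 * m]).IsSymm ∧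
      ((1 / 6 : ℝ) • !![2 + 4 * l, 2 - 2 * l, 2 - 2 * l;
          2 - 2 * l, 2 + l + 3 * m, 2 + l - 3 * m;
          2 - 2 * l, 2 + l - 3 * m, 2 + l + 3 * m]) ∈ doublyStochastic ℝ (Fin 3) ∧
      ((1 / 6 : ℝ) • !![2 + 4 * l, 2 - 2 * l, 2 - 2 * l;
          2 - 2 * l, 2 + l + 3 * m, 2 + l - 3 * m;
          2 - 2 * l, 2 + l - 3 * m, 2 + l + 3 * m]).charpoly.roots = {1, l, m}) := by
  constructor
  · rcases le_total m l with hml | hlm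
    · exact ⟨Mat l m, Mat_symm l m, Mat_mem l m h2 h5 hml h6, Mat_roots l m⟩
    · refine ⟨Mat m l, Mat_symm m l,
        Mat_mem m l h4 (by linarith) hlm (by linarith), ?_⟩
      rw [Mat_roots]
      exact congrArg (Multiset.cons 1) (Multiset.cons_swap m l 0)
  · intro hml
    exact ⟨Mat_symm l m, Mat_mem l m h2 h5 hml h6, Mat_roots l m⟩
end
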